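/- Suppose v ≥ k componentwise and r=(r_1,…,r_m) satisfies 0 ≤ r_i ≤ k_i − 2 for all i. Then C(v,k,2) ≤ C(v−r, k−r, 2). -/

import Mathlib

open Finset

/-- A generalized covering design of strength `t`: the blocks are indexed by `R`;
block `D r` has `i`-th component a `k i`-subset of the `v i`-set `Fin (v i)`, and every
admissible tuple of sets `T` (componentwise sizes at most `k`, total size `t`) is contained
componentwise in some block. -/
def IsGCD {ι : Type*} [Fintype ι] (v k : ι → ℕ) (t : ℕ) {R : Type*}
    (D : R → ∀ i, Finset (Fin (v i))) : Prop :=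
  (∀ r i, (D r i).card = k i) ∧
  ∀ T : ∀ i, Finset (Fin (v i)),
    (∀ i, (T i).card ≤ k i) → (∑ i, (T i).card) = t →
    ∃ r, ∀ i, T i ⊆ D r i

/-- The generalized covering number: the least `N` such that a generalized covering design
with `N` blocks exists. -/
noncomputable def GCNum {ι : Type*} [Fintype ι] (v k : ι → ℕ) (t : ℕ) : ℕ :=
  sInf {N | ∃ D : Fin N → ∀ i, Finset (Fin (v i)), IsGCD v k t D}

/-! Adjoin `r i` new points to the `i`-th part of every block of an optimal
GC(v − r, k − r, 2). A pair in the enlarged point sets is covered by any block covering its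
trace on the old points; that trace has total size at most 2 and can be padded to size exactly 2
inside one part, because `k i - r i ≥ 2`. -/

variable {ι : Type*} [Fintype ι] {v k : ι → ℕ} {t : ℕ} {R : Type*}

theorem IsGCD.exists_cover_of_sum_le {D : R → ∀ i, Finset (Fin (v i))} (hD : IsGCD v k t D)
    {i₀ : ι} (hti₀ : t ≤ k i₀) (hkv : k i₀ ≤ v i₀) {T : ∀ i, Finset (Fin (v i))}
    (hT : ∀ i, #(T i) ≤ k i) (hsum : ∑ i, #(T i) ≤ t) :
    ∃ b, ∀ i, T i ⊆ D b i := by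
  classical
  have hTi₀ : #(T i₀) ≤ ∑ i, #(T i) :=
    single_le_sum (f := fun i => #(T i)) (fun i _ => Nat.zero_le _) (mem_univ i₀)
  -- pad the `i₀`-th component so that the total size becomes exactly `t`
  obtain ⟨S, hTS, hS⟩ := exists_superset_card_eq (s := T i₀)
    (n := #(T i₀) + (t - ∑ i, #(T i))) (Nat.le_add_right _ _)
    (by simp only [Fintype.card_fin]; omega)
  have hpad_card : ∀ i, #(Function.update T i₀ S i) ≤ k i := by
    intro i
    rcases eq_or_ne i i₀ with rfl | hi
    · simp only [Function.update_self]; omega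
    · simpa [hi] using hT i
  have hpad_sum : ∑ i, #(Function.update T i₀ S i) = t := by
    have hcard : ∀ i, #(Function.update T i₀ S i) = Function.update (fun i => #(T i)) i₀ #S i :=
      fun i => Function.apply_update (fun _ s => #s) T i₀ S i
    have hsplit := add_sum_erase univ (fun i => #(T i)) (mem_univ i₀)
    rw [← sdiff_singleton_eq_erase] at hsplit
    simp only [hcard, sum_update_of_mem (mem_univ i₀)]
    omega
  obtain ⟨b, hb⟩ := hD.2 _ hpad_card hpad_sum
  refine ⟨b, fun i => ?_⟩
  rcases eq_or_ne i i₀ with rfl | hi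
  · exact hTS.trans (by simpa using hb i)
  · simpa [hi] using hb i

def addCommonPoints (r : ι → ℕ) (D : R → ∀ i, Finset (Fin (v i))) :
    R → ∀ i, Finset (Fin (v i + r i)) :=
  fun b i => ((D b i).disjSum univ).map finSumFinEquiv.toEmbedding

theorem isGCD_addCommonPoints {D : R → ∀ i, Finset (Fin (v i))} (hD : IsGCD v k t D)
    (r : ι → ℕ) (ht : 0 < t) (htk : ∀ i, t ≤ k i) (hkv : ∀ i, k i ≤ v i) :
    IsGCD (fun i => v i + r i) (fun i => k i + r i) t (addCommonPoints r D) := by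
  refine ⟨fun b i => by simp [addCommonPoints, hD.1 b i], fun T hT hsum => ?_⟩
  let B : ∀ i, Finset (Fin (v i)) := fun i => ((T i).map finSumFinEquiv.symm.toEmbedding).toLeft
  have hBT : ∀ i, #(B i) ≤ #(T i) := fun i => card_toLeft_le.trans_eq (card_map _)
  have hTt : ∀ i, #(T i) ≤ t := fun i =>
    hsum ▸ single_le_sum (f := fun i => #(T i)) (fun i _ => Nat.zero_le _) (mem_univ i)
  obtain ⟨i₀, -, -⟩ := exists_ne_zero_of_sum_ne_zero (hsum.trans_ne ht.ne')
  obtain ⟨b, hb⟩ := hD.exists_cover_of_sum_le (htk i₀) (hkv i₀) (T := B)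
    (fun i => (hBT i).trans ((hTt i).trans (htk i))) (hsum ▸ sum_le_sum fun i _ => hBT i)
  refine ⟨b, fun i => ?_⟩
  rw [← map_subset_map (f := finSumFinEquiv.symm.toEmbedding)]
  simpa [addCommonPoints, map_map, subset_disjSum] using hb i

theorem exists_isGCD (hkv : ∀ i, k i ≤ v i) :
    ∃ N, ∃ D : Fin N → ∀ i, Finset (Fin (v i)), IsGCD v k t D := by
  classical
  let Blocks := ∀ i, {s : Finset (Fin (v i)) // #s = k i}
  let e := Fintype.equivFin Blocks
  refine ⟨Fintype.card Blocks, fun n i => (e.symm n i).1, fun n i => (e.symm n i).2, ?_⟩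
  intro T hT _
  choose S hTS hS using fun i => exists_superset_card_eq (hT i) (by simpa using hkv i)
  exact ⟨e fun i => ⟨S i, hS i⟩, fun i => by simpa using hTS i⟩

theorem GCNum_le_of_isGCD {N : ℕ} {D : Fin N → ∀ i, Finset (Fin (v i))} (hD : IsGCD v k t D) :
    GCNum v k t ≤ N :=
  Nat.sInf_le ⟨D, hD⟩

theorem exists_isGCD_GCNum (hkv : ∀ i, k i ≤ v i) :
    ∃ D : Fin (GCNum v k t) → ∀ i, Finset (Fin (v i)), IsGCD v k t D :=
  Nat.sInf_mem (exists_isGCD hkv)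

theorem GCNum_add_le (r : ι → ℕ) (ht : 0 < t) (htk : ∀ i, t ≤ k i) (hkv : ∀ i, k i ≤ v i) :
    GCNum (fun i => v i + r i) (fun i => k i + r i) t ≤ GCNum v k t := by
  obtain ⟨D, hD⟩ := exists_isGCD_GCNum (t := t) hkv
  exact GCNum_le_of_isGCD (isGCD_addCommonPoints hD r ht htk hkv)

/-- If `0 ≤ r_i ≤ k_i - 2` for all `i`, then `C(v,k,2) ≤ C(v-r,k-r,2)`. -/
theorem gc_amalgamation_bound {m : ℕ} (v k r : Fin m → ℕ)
    (hkv : ∀ i, k i ≤ v i) (hr : ∀ i, r i + 2 ≤ k i) :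
    GCNum v k 2 ≤ GCNum (fun i => v i - r i) (fun i => k i - r i) 2 := by
  have hv : (fun i => v i - r i + r i) = v := funext fun i => by have := hr i; have := hkv i; omega
  have hk : (fun i => k i - r i + r i) = k := funext fun i => by have := hr i; omega
  calc GCNum v k 2
      = GCNum (fun i => v i - r i + r i) (fun i => k i - r i + r i) 2 := by rw [hv, hk]
    _ ≤ _ := GCNum_add_le r two_pos (fun i => by have := hr i; omega)
        fun i => Nat.sub_le_sub_right (hkv i) (r i)
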